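/- Two ℓ-tuples (x_1,...,x_ℓ), (y_1,...,y_ℓ) ∈ (F_2^n)^ℓ lie in the same orbit of the diagonal coordinate-permutation action of S_n if and only if they have the same symmetric difference configuration, i.e., |∑_{j∈J} x_j| = |∑_{j∈J} y_j| for every J ⊆ [ℓ]. -/
import Mathlib

open Finset

private def chi (a : ZMod 2) : ℤ := if a = 0 then 1 else -1

private lemma chi_zero : chi 0 = 1 := rfl

private lemma chi_add (a b : ZMod 2) : chi (a + b) = chi a * chi b := by
  revert a b; decide

private lemma chi_sum {α : Type*} (s : Finset α) (f : α → ZMod 2) :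
    chi (∑ j ∈ s, f j) = ∏ j ∈ s, chi (f j) := by
  induction s using Finset.cons_induction with
  | empty => simp [chi_zero]
  | cons a s h ih => rw [Finset.sum_cons, Finset.prod_cons, chi_add, ih]

private lemma sum_chi {n : ℕ} (v : Fin n → ZMod 2) :
    ∑ i, chi (v i) = (n : ℤ) - 2 * hammingNorm v := by
  have : ∀ i, chi (v i) = 1 - 2 * (if v i ≠ 0 then (1:ℤ) else 0) := by
    intro i; by_cases h : v i = 0 <;> simp [chi, h]
  rw [Finset.sum_congr rfl fun i _ => this i]
  rw [Finset.sum_sub_distrib, ← Finset.mul_sum, Finset.sum_boole]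
  simp [hammingNorm]

private def cnt {n ℓ : ℕ} (x : Fin ℓ → Fin n → ZMod 2) (q : Fin ℓ → ZMod 2) : ℕ :=
  #{i | ∀ j, x j i = q j}

private lemma key {n ℓ : ℕ} (x : Fin ℓ → Fin n → ZMod 2) (q : Fin ℓ → ZMod 2) :
    ∑ J : Finset (Fin ℓ), (∏ j ∈ J, chi (q j)) * (∑ i, chi ((∑ j ∈ J, x j) i))
      = 2 ^ ℓ * (cnt x q : ℤ) := by
  have h1 : ∀ J : Finset (Fin ℓ), ∀ i, chi ((∑ j ∈ J, x j) i) = ∏ j ∈ J, chi (x j i) := by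
    intro J i
    have : (∑ j ∈ J, x j) i = ∑ j ∈ J, x j i := by simp
    rw [this, chi_sum]
  have h2 : ∀ a b : ZMod 2, (a + b = 0 ↔ b = a) := by decide
  calc ∑ J : Finset (Fin ℓ), (∏ j ∈ J, chi (q j)) * (∑ i, chi ((∑ j ∈ J, x j) i))
      = ∑ J : Finset (Fin ℓ), ∑ i, ∏ j ∈ J, (chi (q j) * chi (x j i)) := by
        refine Finset.sum_congr rfl fun J _ => ?_
        rw [Finset.mul_sum]
        refine Finset.sum_congr rfl fun i _ => ?_
        rw [h1, ← Finset.prod_mul_distrib]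
    _ = ∑ i, ∑ J : Finset (Fin ℓ), ∏ j ∈ J, (chi (q j) * chi (x j i)) := Finset.sum_comm
    _ = ∑ i : Fin n, ∏ j, (chi (q j) * chi (x j i) + 1) := by
        refine Finset.sum_congr rfl fun i _ => ?_
        rw [Finset.prod_add]
        rw [← Finset.powerset_univ]
        refine (Finset.sum_congr rfl fun J _ => ?_).symm
        simp
    _ = ∑ i : Fin n, (if ∀ j, x j i = q j then (2:ℤ)^ℓ else 0) := by
        refine Finset.sum_congr rfl fun i _ => ?_
        have hfac : ∀ j, chi (q j) * chi (x j i) + 1 = if x j i = q j then (2:ℤ) else 0 := by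
          intro j
          rw [← chi_add]
          by_cases h : x j i = q j
          · rw [if_pos h, (h2 _ _).mpr h, chi_zero]; norm_num
          · rw [if_neg h]
            have hne : q j + x j i ≠ 0 := fun hh => h ((h2 _ _).mp hh)
            simp [chi, hne]
        rw [Finset.prod_congr rfl fun j _ => hfac j]
        by_cases h : ∀ j, x j i = q j
        · rw [if_pos h, Finset.prod_congr rfl fun j _ => if_pos (h j)]
          simp
        · rw [if_neg h]
          obtain ⟨j, hj⟩ := not_forall.mp h
          exact Finset.prod_eq_zero (Finset.mem_univ j) (if_neg hj)
    _ = 2 ^ ℓ * (cnt x q : ℤ) := by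
        have : ∀ i : Fin n, (if (∀ j, x j i = q j) then (2:ℤ)^ℓ else 0)
            = 2^ℓ * (if (∀ j, x j i = q j) then 1 else 0) := by
          intro i; split <;> ring
        rw [Finset.sum_congr rfl fun i _ => this i, ← Finset.mul_sum, Finset.sum_boole]
        simp [cnt]

theorem sameOrbit_iff_sdConfig_eq (n ℓ : ℕ) (x y : Fin ℓ → (Fin n → ZMod 2)) :
    (∃ σ : Equiv.Perm (Fin n), ∀ j i, y j i = x j (σ i)) ↔
      ∀ J : Finset (Fin ℓ),
        hammingNorm (∑ j ∈ J, x j) = hammingNorm (∑ j ∈ J, y j) := by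
  constructor
  · rintro ⟨σ, hσ⟩ J
    have hv : ∀ i, ∑ j ∈ J, y j i = ∑ j ∈ J, x j (σ i) := by
      intro i; exact Finset.sum_congr rfl fun j _ => hσ j i
    simp only [hammingNorm]
    refine Finset.card_equiv σ.symm fun i => ?_
    have := hv (σ.symm i)
    simp only [Finset.mem_filter, Finset.mem_univ, true_and, Finset.sum_apply]
    rw [this, Equiv.apply_symm_apply]
  · intro h
    have hS : ∀ J : Finset (Fin ℓ),
        (∑ i, chi ((∑ j ∈ J, x j) i)) = ∑ i, chi ((∑ j ∈ J, y j) i) := by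
      intro J; rw [sum_chi, sum_chi, h J]
    have hcnt : ∀ q, cnt x q = cnt y q := by
      intro q
      have := key x q
      rw [Finset.sum_congr rfl (fun J _ => by rw [hS J]), key y q] at this
      have h2 : (2:ℤ)^ℓ ≠ 0 := by positivity
      exact_mod_cast mul_left_cancel₀ h2 this.symm
    classical
    have hcard : ∀ q : Fin ℓ → ZMod 2,
        Fintype.card {i // (fun j => y j i) = q} = Fintype.card {i // (fun j => x j i) = q} := by
      intro q
      have e1 : Fintype.card {i // (fun j => y j i) = q} = cnt y q := by
        rw [Fintype.card_subtype]; unfold cnt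
        congr 1; ext i; simp [funext_iff]
      have e2 : Fintype.card {i // (fun j => x j i) = q} = cnt x q := by
        rw [Fintype.card_subtype]; unfold cnt
        congr 1; ext i; simp [funext_iff]
      rw [e1, e2, hcnt]
    have e : ∀ q : Fin ℓ → ZMod 2,
        {i // (fun j => y j i) = q} ≃ {i // (fun j => x j i) = q} :=
      fun q => Fintype.equivOfCardEq (hcard q)
    refine ⟨Equiv.ofFiberEquiv e, fun j i => ?_⟩
    have := Equiv.ofFiberEquiv_map e i
    exact (congrFun this j).symm
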